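/- arXiv:1304.7169 — 6 statements merged into one kernel-verified Lean document; each statement's English description precedes it below -/
import Mathlib

section
/- For an odd prime p, positive integers j, m, n, and an integer h with 1 ≤ h ≤ 2^{m-1}·p^{n-1}, one has x^{j·2^{m-1}·p^n - h} ≡ Σ_{a=0}^{p-2} (-1)^{a+j} x^{(a+1)·2^{m-1}·p^{n-1} - h} (mod Φ_{2^m p^n}(x)) in Q[x]. -/
/-!
Write `q = 2^(m-1) p^(n-1)`, so that `2^m p^n = 2qp`, and let `ζ` be a primitive `2qp`-th root of
unity. Then `ζ^(qp) = -1` while `ω = ζ^q ≠ -1`, so `-ω` is a nontrivial `p`-th root of unity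
(`p` odd) and `∑_{a<p} (-ω)^a = 0`, i.e. `∑_{a<p-1} (-1)^a ω^(a+1) = 1`. Multiplying the claimed
congruence by `x^h` turns it into `(-1)^j = (-1)^j ∑_{a<p-1} (-1)^a ω^(a+1)` at `x = ζ`, and
`Φ_{2qp}` is the minimal polynomial of `ζ` over `ℚ`.
-/

open Polynomial Finset

theorem Polynomial.cyclotomic_dvd_of_aeval_eq_zero {K : Type*} [Field K] [CharZero K] {n : ℕ}
    {ζ : K} (hζ : IsPrimitiveRoot ζ n) (hn : 0 < n) {f : ℚ[X]} (hf : aeval ζ f = 0) :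
    cyclotomic n ℚ ∣ f := by
  rw [cyclotomic_eq_minpoly_rat hζ hn]
  exact minpoly.dvd ℚ ζ hf

theorem IsPrimitiveRoot.pow_eq_neg_one_of_two_mul {R : Type*} [CommRing R] [IsDomain R] {ζ : R}
    {k : ℕ} (hζ : IsPrimitiveRoot ζ (2 * k)) (hk : k ≠ 0) : ζ ^ k = -1 := by
  have h := hζ.pow_of_dvd hk (dvd_mul_left k 2)
  rw [Nat.mul_div_cancel _ (Nat.pos_of_ne_zero hk)] at h
  exact h.eq_neg_one_of_two_right

section Alternating

variable {R : Type*} [CommRing R] [NoZeroDivisors R] {ω : R} {p : ℕ}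

theorem geom_sum_neg_eq_zero (hp : Odd p) (hωp : ω ^ p = -1) (hω : ω ≠ -1) :
    ∑ a ∈ range p, (-ω) ^ a = 0 := by
  have h : (∑ a ∈ range p, (-ω) ^ a) * (1 - -ω) = 0 := by
    rw [geom_sum_mul_neg, hp.neg_pow, hωp]
    ring
  refine (mul_eq_zero.mp h).resolve_right fun h' => hω ?_
  linear_combination h'

theorem sum_range_pred_neg_one_pow_mul_pow_succ (hp : Odd p) (hωp : ω ^ p = -1) (hω : ω ≠ -1) :
    ∑ a ∈ range (p - 1), (-1) ^ a * ω ^ (a + 1) = 1 := by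
  obtain ⟨p, rfl⟩ : ∃ p', p = p' + 1 := ⟨p - 1, by have := hp.pos; omega⟩
  have h := geom_sum_neg_eq_zero hp hωp hω
  have hterm (a : ℕ) : (-ω) ^ (a + 1) = -((-1) ^ a * ω ^ (a + 1)) := by
    rw [neg_pow, pow_succ]
    ring
  simp only [sum_range_succ', hterm, sum_neg_distrib, pow_zero] at h
  rw [Nat.add_sub_cancel]
  linear_combination -h

end Alternating

theorem pow_sub_eq_sum_neg_one_pow_mul {K : Type*} [Field K] {ζ : K} {p q j h : ℕ} (hp : Odd p)
    (hζqp : ζ ^ (q * p) = -1) (hζq : ζ ^ q ≠ -1) (hj : 1 ≤ j) (hh : h ≤ q) :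
    ζ ^ (j * (q * p) - h) = ∑ a ∈ range (p - 1), (-1) ^ (a + j) * ζ ^ ((a + 1) * q - h) := by
  have hζ : ζ ≠ 0 := by
    rintro rfl
    rcases q.eq_zero_or_pos with rfl | hq
    · exact hζq (by simpa using hζqp)
    · simp [zero_pow (Nat.mul_pos hq hp.pos).ne'] at hζqp
  have hterm : ∀ a ∈ range (p - 1), (-1) ^ (a + j) * ζ ^ ((a + 1) * q - h) =
      (-1) ^ j * ((-1) ^ a * (ζ ^ q) ^ (a + 1)) / ζ ^ h := by
    intro a _
    rw [pow_sub₀ ζ hζ (hh.trans (Nat.le_mul_of_pos_left q a.add_one_pos)), pow_mul']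
    ring
  have hjqp : h ≤ j * (q * p) := hh.trans (Nat.le_mul_of_pos_right q hp.pos |>.trans
    (Nat.le_mul_of_pos_left _ hj))
  rw [sum_congr rfl hterm, ← sum_div, ← mul_sum,
    sum_range_pred_neg_one_pow_mul_pow_succ hp (by rwa [← pow_mul]) hζq,
    pow_sub₀ ζ hζ hjqp, pow_mul', hζqp, mul_one, div_eq_mul_inv]

theorem pow_sub_congr_general (p j m n h : ℕ) (hp : p.Prime) (hodd : p ≠ 2)
    (hj : 1 ≤ j) (hm : 1 ≤ m) (hn : 1 ≤ n)
    (h2 : h ≤ 2 ^ (m - 1) * p ^ (n - 1)) :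
    cyclotomic (2 ^ m * p ^ n) ℚ ∣
      (X : ℚ[X]) ^ (j * 2 ^ (m - 1) * p ^ n - h) -
        ∑ a ∈ Finset.range (p - 1),
          (-1 : ℚ[X]) ^ (a + j) * X ^ ((a + 1) * 2 ^ (m - 1) * p ^ (n - 1) - h) := by
  obtain ⟨m, rfl⟩ : ∃ k, m = k + 1 := ⟨m - 1, by omega⟩
  obtain ⟨n, rfl⟩ : ∃ k, n = k + 1 := ⟨n - 1, by omega⟩
  simp only [Nat.add_sub_cancel] at h2 ⊢
  set q := 2 ^ m * p ^ n with hq_def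
  have hq : 0 < q := Nat.mul_pos (by positivity) (pow_pos hp.pos n)
  have hqp : 0 < q * p := Nat.mul_pos hq hp.pos
  have hN : 2 ^ (m + 1) * p ^ (n + 1) = 2 * (q * p) := by rw [hq_def]; ring
  obtain ⟨ζ, hζ⟩ : ∃ ζ : ℂ, IsPrimitiveRoot ζ (2 * (q * p)) :=
    ⟨_, Complex.isPrimitiveRoot_exp _ (by omega)⟩
  have hζqp : ζ ^ (q * p) = -1 := hζ.pow_eq_neg_one_of_two_mul hqp.ne'
  have hζq : ζ ^ q ≠ -1 := by
    intro hζq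
    have hdvd : 2 * (q * p) ∣ 2 * (q * 1) :=
      (hζ.pow_eq_one_iff_dvd _).mp (by rw [mul_one, mul_comm, pow_mul, hζq]; norm_num)
    rw [Nat.mul_dvd_mul_iff_left two_pos, Nat.mul_dvd_mul_iff_left hq, Nat.dvd_one] at hdvd
    exact hp.one_lt.ne' hdvd
  rw [hN]
  refine cyclotomic_dvd_of_aeval_eq_zero hζ (by omega) ?_
  have hexp (a : ℕ) : (a + 1) * 2 ^ m * p ^ n = (a + 1) * q := mul_assoc ..
  simp only [map_sub, map_sum, map_mul, map_pow, aeval_X, map_neg, map_one, hexp,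
    show j * 2 ^ m * p ^ (n + 1) = j * (q * p) by rw [hq_def]; ring]
  rw [sub_eq_zero, pow_sub_eq_sum_neg_one_pow_mul (hp.odd_of_ne_two hodd) hζqp hζq hj h2]

theorem pow_sub_congr (p j m n h : ℕ) (hp : p.Prime) (hodd : p ≠ 2)
    (hj : 1 ≤ j) (hm : 1 ≤ m) (hn : 1 ≤ n)
    (h1 : 1 ≤ h) (h2 : h ≤ 2 ^ (m - 1) * p ^ (n - 1)) :
    cyclotomic (2 ^ m * p ^ n) ℚ ∣
      (X : ℚ[X]) ^ (j * 2 ^ (m - 1) * p ^ n - h) -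
        ∑ a ∈ Finset.range (p - 1),
          (-1 : ℚ[X]) ^ (a + j) * X ^ ((a + 1) * 2 ^ (m - 1) * p ^ (n - 1) - h) :=
  pow_sub_congr_general p j m n h hp hodd hj hm hn h2
end

section
/- Let p be a prime with p ≡ 1 (mod 4) and p > 5. Then there exists an integer a with 3(p-1)/4 - 1 ≤ a ≤ p - 2 such that 2a+1 is a quadratic non-residue modulo p, i.e., the Legendre symbol ((2a+1)/p) = -1. -/
/-!
Write `p = 4k + 1`. If `2a + 1` were a square mod `p` for every `a ∈ [3k - 1, 4k - 1]`, then, since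
`-1` is a square and `-(2a + 1) ≡ 2(4k - a) + 1`, so would be `2n + 1` for every `n ∈ [1, k + 1]`.
As `n ↦ 2n + 1` is injective mod `p`, this gives `2k + 2` squares in `ZMod p`, while a finite field
of odd order `q` has only `(q + 1) / 2` of them.
-/

open Finset

theorem FiniteField.two_mul_card_le_card_add_one_of_isSquare {F : Type*} [Field F] [Fintype F]
    [DecidableEq F] (hF : ringChar F ≠ 2) {s : Finset F} (hs : ∀ x ∈ s, IsSquare x) :
    2 * #s ≤ Fintype.card F + 1 := by
  obtain ⟨c, hc⟩ := FiniteField.exists_nonsquare hF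
  have hc0 : c ≠ 0 := by rintro rfl; exact hc ⟨0, by simp⟩
  -- multiplying by a non-square moves the nonzero squares of `s` off `s`
  have hdisj : Disjoint s ((s.erase 0).image (c * ·)) := by
    rw [disjoint_left]
    rintro _ hx hx'
    obtain ⟨y, hy, rfl⟩ := mem_image.mp hx'
    obtain ⟨hy0, hy⟩ := mem_erase.mp hy
    exact hc (by simpa [hy0] using (hs _ hx).div (hs y hy))
  have hcard := card_le_univ (s ∪ (s.erase 0).image (c * ·))
  rw [card_union_of_disjoint hdisj, card_image_of_injective _ (mul_right_injective₀ hc0)] at hcard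
  have := pred_card_le_card_erase (s := s) (a := 0)
  omega

theorem CharP.injOn_two_mul_add_one {F : Type*} [Field F] (p : ℕ) [CharP F p] (hp : p ≠ 2) :
    (Set.Iio p).InjOn (fun n : ℕ => (2 * n + 1 : F)) := by
  have h2 : (2 : F) ≠ 0 := Ring.two_ne_zero (by rwa [ringChar.eq F p])
  exact ((add_left_injective 1).comp (mul_right_injective₀ h2)).comp_injOn
    (CharP.natCast_injOn_Iio F p)

theorem ZMod.isSquare_two_mul_add_one_of_add_eq {p : ℕ} [Fact p.Prime] (hp : p % 4 = 1)
    {n m : ℕ} (hnm : n + m + 1 = p) (hm : IsSquare (2 * m + 1 : ZMod p)) :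
    IsSquare (2 * n + 1 : ZMod p) := by
  have hneg : (2 * n + 1 : ZMod p) = -1 * (2 * m + 1) := by
    have hp0 : ((n + m + 1 : ℕ) : ZMod p) = 0 := hnm ▸ ZMod.natCast_self p
    push_cast at hp0
    linear_combination 2 * hp0
  rw [hneg]
  exact (ZMod.exists_sq_eq_neg_one_iff.mpr (by omega)).mul hm

theorem exists_nonresidue (p : ℕ) [Fact p.Prime] (hp1 : p % 4 = 1) (hp5 : 5 < p) :
    ∃ a : ℤ, 3 * ((p : ℤ) - 1) / 4 - 1 ≤ a ∧ a ≤ (p : ℤ) - 2 ∧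
      legendreSym p (2 * a + 1) = -1 := by
  obtain ⟨k, hk⟩ : ∃ k, p = 4 * k + 1 := ⟨p / 4, by omega⟩
  have hkℤ : (p : ℤ) = 4 * k + 1 := by exact_mod_cast hk
  by_contra! hres
  set f : ℕ → ZMod p := fun n => 2 * n + 1
  have hhigh : ∀ n ∈ Icc (3 * k - 1) (4 * k - 1), IsSquare (f n) := by
    intro n hn
    rw [mem_Icc] at hn
    simpa [f, legendreSym.eq_neg_one_iff] using hres n (by omega) (by omega)
  have hlow : ∀ n ∈ Icc 1 (k + 1), IsSquare (f n) := by
    intro n hn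
    rw [mem_Icc] at hn
    exact ZMod.isSquare_two_mul_add_one_of_add_eq hp1 (m := 4 * k - n) (by omega)
      (hhigh _ (mem_Icc.mpr (by omega)))
  set S := Icc 1 (k + 1) ∪ Icc (3 * k - 1) (4 * k - 1)
  have hS : #S = 2 * k + 2 := by
    rw [card_union_of_disjoint (disjoint_left.mpr fun n h h' => by
      simp only [mem_Icc] at h h'; omega), Nat.card_Icc, Nat.card_Icc]
    omega
  have hinj : Set.InjOn f S := (CharP.injOn_two_mul_add_one p (by omega)).mono fun n hn => by
    simp only [S, coe_union, coe_Icc, Set.mem_union, Set.mem_Icc] at hn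
    exact Set.mem_Iio.mpr (by omega)
  have hsq : ∀ x ∈ S.image f, IsSquare x := by
    simp only [S, mem_image, mem_union]
    rintro _ ⟨n, hn | hn, rfl⟩
    exacts [hlow n hn, hhigh n hn]
  have hchar : ringChar (ZMod p) ≠ 2 := by rw [ZMod.ringChar_zmod_n]; omega
  have hcard := FiniteField.two_mul_card_le_card_add_one_of_isSquare hchar hsq
  rw [card_image_of_injOn hinj, hS, ZMod.card] at hcard
  omega
end

section
/- Let t(x) = 6x² + 1, r(x) = 36x⁴ + 36x³ + 18x² + 6x + 1, and q(x) = 36x⁴ + 36x³ + 24x² + 6x + 1 in Z[x]. Then r(x) divides q(x) + 1 - t(x), r(x) divides Φ_12(t(x) - 1), and 4·q(x) - t(x)² = 3·(6x² + 4x + 1)². -/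
/-! With `t - 1 = 6x²`, the evaluation `Φ₁₂(6x²) = 1296x⁸ - 36x⁴ + 1` factors as `r(x) · r(-x)`;
the other two relations are polynomial identities (indeed `q + 1 - t = r`). -/

open Polynomial

section

variable (R : Type*) [CommRing R]

theorem cyclotomic_twelve : cyclotomic 12 R = X ^ 4 - X ^ 2 + 1 := by
  rw [show 12 = 6 * 2 from rfl,
    ← cyclotomic_expand_eq_cyclotomic Nat.prime_two (by norm_num : 2 ∣ 6), cyclotomic_six]
  simp only [map_add, map_sub, map_pow, map_one, expand_X]
  ring

theorem cyclotomic_twelve_comp_six_mul_sq :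
    (cyclotomic 12 R).comp (6 * X ^ 2) =
      (36 * X ^ 4 + 36 * X ^ 3 + 18 * X ^ 2 + 6 * X + 1) *
        (36 * X ^ 4 - 36 * X ^ 3 + 18 * X ^ 2 - 6 * X + 1) := by
  rw [cyclotomic_twelve]
  simp only [add_comp, sub_comp, pow_comp, one_comp, X_comp]
  ring

end

theorem barreto_naehrig_family :
    let t : ℤ[X] := 6 * X ^ 2 + 1
    let r : ℤ[X] := 36 * X ^ 4 + 36 * X ^ 3 + 18 * X ^ 2 + 6 * X + 1
    let q : ℤ[X] := 36 * X ^ 4 + 36 * X ^ 3 + 24 * X ^ 2 + 6 * X + 1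
    r ∣ q + 1 - t ∧ r ∣ (cyclotomic 12 ℤ).comp (t - 1) ∧
      4 * q - t ^ 2 = 3 * (6 * X ^ 2 + 4 * X + 1) ^ 2 := by
  intro t r q
  have ht : t - 1 = 6 * X ^ 2 := by ring
  refine ⟨⟨1, by ring⟩, ?_, by ring⟩
  rw [ht, cyclotomic_twelve_comp_six_mul_sq]
  exact dvd_mul_right r _
end

section
/- Let t(x) = x + 1, r(x) = x⁶ + x³ + 1, and q(x) = (1/3)(x-1)²(x⁶ + x³ + 1) + x in Q[x]. Then r(x) divides q(x) + 1 - t(x) in Q[x], r(x) divides Φ_9(t(x) - 1), and there exists y(x) ∈ Q[x] such that 4·q(x) = t(x)² + 3·y(x)². -/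
open Polynomial

theorem cyclotomic_nine (R : Type*) [CommRing R] : cyclotomic 9 R = X ^ 6 + X ^ 3 + 1 := by
  rw [show 9 = 3 * 3 from rfl, ← cyclotomic_expand_eq_cyclotomic Nat.prime_three dvd_rfl,
    cyclotomic_three]
  simp only [map_add, map_pow, expand_X, map_one]
  ring

/-- For `q = c (x - 1)² r + x` and `3c = 1`:
`4q - (x + 1)² = (x - 1)² (4cr - 1) = 3 (c (x - 1))² (4r - 3)`. -/
theorem four_mul_eq_sq_add_three_mul_sq {R : Type*} [CommRing R] {c r s : R} (x : R)
    (hc : 3 * c = 1) (hs : 4 * r - 3 = s ^ 2) :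
    4 * (c * (x - 1) ^ 2 * r + x) = (x + 1) ^ 2 + 3 * (c * (x - 1) * s) ^ 2 := by
  linear_combination (x - 1) ^ 2 * (1 - c * (4 * r - 3)) * hc + 3 * c ^ 2 * (x - 1) ^ 2 * hs

theorem cyclotomic_family_k9 :
    let t : ℚ[X] := X + 1
    let r : ℚ[X] := X ^ 6 + X ^ 3 + 1
    let q : ℚ[X] := C (1 / 3 : ℚ) * (X - 1) ^ 2 * (X ^ 6 + X ^ 3 + 1) + X
    r ∣ q + 1 - t ∧ r ∣ (cyclotomic 9 ℚ).comp (t - 1) ∧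
      ∃ y : ℚ[X], 4 * q = t ^ 2 + 3 * y ^ 2 := by
  intro t r q
  have hc : (3 : ℚ[X]) * C (1 / 3) = 1 := by
    rw [← C_ofNat, ← C_mul]; norm_num
  refine ⟨⟨C (1 / 3) * (X - 1) ^ 2, by ring⟩, ?_, _,
    four_mul_eq_sq_add_three_mul_sq X hc (s := 2 * X ^ 3 + 1) (by ring)⟩
  rw [add_sub_cancel_right, comp_X, cyclotomic_nine]
end

section
/- Let p be an odd prime, m ≥ 2 and n ≥ 1 integers, and g an odd integer with gcd(g, 2^m p^n) = 1. Let y₁(x) be the remainder of x^{2^{m-2} p^n + g} - x^{2^{m-2} p^n} upon division by Φ_{2^m p^n}(x) in Q[x]. Then deg y₁(x) ≥ 2^{m-2} p^n. -/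
/-!
Since `4 ∣ 2^m p^n`, `Φ = Φ_{2^m p^n}` is a polynomial in `x²`, so `x ↦ -x` fixes `Φ` and commutes
with reduction modulo `Φ`. Hence the remainder of `x^k` is even or odd together with `k`, and its
coefficient of `x^j` vanishes when `k + j` is odd. With `K = 2^{m-2} p^n` and `g` odd, `K + g + K`
is odd, so the coefficient of `x^K` in `y₁` is `0 - 1 = -1`, because `x^K` is already reduced:
`K < φ(2^m p^n) = 2^{m-1} φ(p^n)`.
-/

open Polynomial
open scoped Nat

namespace Polynomial

variable {R : Type*} [CommRing R]

lemma neg_X_pow (k : ℕ) : (-X : R[X]) ^ k = C ((-1) ^ k) * X ^ k := by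
  rw [neg_pow, map_pow, map_neg, map_one]

lemma coeff_comp_neg_X (f : R[X]) (k : ℕ) : (f.comp (-X)).coeff k = (-1) ^ k * f.coeff k := by
  induction f using Polynomial.induction_on' with
  | add p q hp hq => rw [add_comp, coeff_add, coeff_add, hp, hq, mul_add]
  | monomial a c =>
    rw [← C_mul_X_pow_eq_monomial, mul_comp, C_comp, pow_comp, X_comp, neg_X_pow, ← mul_assoc,
      ← C_mul, coeff_C_mul_X_pow, coeff_C_mul_X_pow]
    split_ifs with h
    · rw [h, mul_comm]
    · rw [mul_zero]

lemma cyclotomic_comp_neg_X_of_four_dvd {N : ℕ} (hN : 4 ∣ N) :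
    (cyclotomic N R).comp (-X) = cyclotomic N R := by
  obtain ⟨M, rfl⟩ := hN
  have hexpand : cyclotomic (4 * M) R = (cyclotomic (2 * M) R).comp (X ^ 2) := by
    rw [← expand_eq_comp_X_pow, cyclotomic_expand_eq_cyclotomic Nat.prime_two (dvd_mul_right 2 M)]
    ring_nf
  rw [hexpand, comp_assoc, pow_comp, X_comp, neg_sq]

lemma modByMonic_comp_neg_X {f : R[X]} (hf : f.Monic) (hf_even : f.comp (-X) = f) (P : R[X]) :
    (P %ₘ f).comp (-X) = P.comp (-X) %ₘ f := by
  nontriviality R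
  refine ((div_modByMonic_unique ((P /ₘ f).comp (-X)) _ hf ⟨?_, ?_⟩).2).symm
  · conv_rhs => rw [← modByMonic_add_div P f]
    rw [add_comp, mul_comp_neg_X, hf_even]
  · rw [degree_comp_neg_X]
    exact degree_modByMonic_lt P hf

lemma coeff_X_pow_modByMonic_eq_zero_of_odd [IsAddTorsionFree R] {f : R[X]} (hf : f.Monic)
    (hf_even : f.comp (-X) = f) {k j : ℕ} (hkj : Odd (k + j)) : (X ^ k %ₘ f).coeff j = 0 := by
  have hr : (X ^ k %ₘ f).comp (-X) = C ((-1) ^ k) * (X ^ k %ₘ f) := by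
    rw [modByMonic_comp_neg_X hf hf_even, pow_comp, X_comp, neg_X_pow, ← smul_eq_C_mul,
      smul_modByMonic, smul_eq_C_mul]
  have hcoeff := congrArg (coeff · j) hr
  simp only [coeff_comp_neg_X, coeff_C_mul] at hcoeff
  rw [← self_eq_neg]
  calc (X ^ k %ₘ f).coeff j = (-1) ^ j * ((-1) ^ j * (X ^ k %ₘ f).coeff j) := by
        rw [← mul_assoc, ← pow_add, Even.neg_one_pow ⟨j, rfl⟩, one_mul]
    _ = (-1) ^ (k + j) * (X ^ k %ₘ f).coeff j := by rw [hcoeff, ← mul_assoc, ← pow_add, add_comm]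
    _ = -(X ^ k %ₘ f).coeff j := by rw [hkj.neg_one_pow, neg_one_mul]

end Polynomial

lemma prime_pow_lt_two_mul_totient {p : ℕ} (hp : p.Prime) (hodd : p ≠ 2) :
    ∀ n, p ^ n < 2 * φ (p ^ n)
  | 0 => by simp
  | n + 1 => by
    have hp3 : 3 ≤ p := hp.two_le.lt_of_ne' hodd
    rw [Nat.totient_prime_pow_succ hp, pow_succ]
    calc p ^ n * p < p ^ n * (2 * (p - 1)) := by gcongr; omega
      _ = 2 * (p ^ n * (p - 1)) := by ring

lemma two_pow_mul_prime_pow_lt_totient {p : ℕ} (hp : p.Prime) (hodd : p ≠ 2) (k n : ℕ) :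
    2 ^ k * p ^ n < φ (2 ^ (k + 2) * p ^ n) := by
  have hcop : Nat.Coprime (2 ^ (k + 2)) (p ^ n) :=
    ((Nat.coprime_primes Nat.prime_two hp).mpr hodd.symm).pow _ _
  rw [Nat.totient_mul hcop, Nat.totient_prime_pow_succ Nat.prime_two, pow_succ]
  calc 2 ^ k * p ^ n < 2 ^ k * (2 * φ (p ^ n)) := by
        gcongr; exact prime_pow_lt_two_mul_totient hp hodd n
    _ = 2 ^ k * 2 * (2 - 1) * φ (p ^ n) := by ring

theorem deg_y1_ge_general (p m n g : ℕ) (hp : p.Prime) (hodd : p ≠ 2) (hm : 2 ≤ m)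
    (hgodd : Odd g) :
    2 ^ (m - 2) * p ^ n ≤
      (((X : ℚ[X]) ^ (2 ^ (m - 2) * p ^ n + g) - X ^ (2 ^ (m - 2) * p ^ n)) %ₘ
          cyclotomic (2 ^ m * p ^ n) ℚ).natDegree := by
  obtain ⟨k, rfl⟩ := Nat.exists_eq_add_of_le' hm
  rw [Nat.add_sub_cancel]
  set K := 2 ^ k * p ^ n
  set Φ := cyclotomic (2 ^ (k + 2) * p ^ n) ℚ
  have hΦ : Φ.Monic := cyclotomic.monic _ ℚ
  have hΦ_even : Φ.comp (-X) = Φ :=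
    cyclotomic_comp_neg_X_of_four_dvd (Dvd.intro (2 ^ k * p ^ n) (by ring))
  have hK : K < Φ.natDegree := by
    rw [natDegree_cyclotomic]
    exact two_pow_mul_prime_pow_lt_totient hp hodd k n
  have hXK : (X ^ K : ℚ[X]) %ₘ Φ = X ^ K := by
    rw [modByMonic_eq_self_iff hΦ, degree_X_pow, degree_eq_natDegree hΦ.ne_zero]
    exact_mod_cast hK
  have hodd_sum : Odd (K + g + K) := by
    rw [add_right_comm]
    exact Even.add_odd ⟨K, rfl⟩ hgodd
  have hcoeff : ((X ^ (K + g) - X ^ K) %ₘ Φ).coeff K = -1 := by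
    rw [sub_modByMonic, hXK, coeff_sub, coeff_X_pow_modByMonic_eq_zero_of_odd hΦ hΦ_even hodd_sum,
      coeff_X_pow_self, zero_sub]
  exact le_natDegree_of_ne_zero (by rw [hcoeff]; norm_num)

theorem deg_y1_ge (p m n g : ℕ) (hp : p.Prime) (hodd : p ≠ 2) (hm : 2 ≤ m) (hn : 1 ≤ n)
    (hgodd : Odd g) (hg : Nat.gcd g (2 ^ m * p ^ n) = 1) :
    2 ^ (m - 2) * p ^ n ≤
      (((X : ℚ[X]) ^ (2 ^ (m - 2) * p ^ n + g) - X ^ (2 ^ (m - 2) * p ^ n)) %ₘ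
          cyclotomic (2 ^ m * p ^ n) ℚ).natDegree :=
  deg_y1_ge_general p m n g hp hodd hm hgodd
end

section
/- Let n ≥ 2 be an integer and g an integer with 1 ≤ g < 3^n and gcd(g, 3) = 1, and let y₁(x) be the remainder of 2x^{3^{n-1}+g} + x^g - 2x^{3^{n-1}} - 1 upon division by r(x) = x^{2·3^{n-1}} + x^{3^{n-1}} + 1 in Q[x]. Then max(deg of the remainder of x^g mod r(x), deg y₁(x)) ≥ 3^{n-1} + 1. -/
/-!
Write `m = 3 ^ (n - 1)` and `r = X ^ (2m) + X ^ m + 1`, monic of degree `2m`. Since `3 ∣ m` and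
`3 ∤ g`, the exponent `g` avoids `0`, `m` and `2m`. If `g < m`, the polynomial defining `y₁` already
has degree `m + g < 2m`, so it is its own remainder. If `m < g < 2m`, `X ^ g` is its own remainder,
and if `2m < g < 3m`, then `X ^ g ≡ -X ^ (g - m) - X ^ (g - 2m)` has degree `g - m > m`.
-/

open Polynomial

section Trinomial

variable {R : Type*} [CommRing R] {m g : ℕ}

theorem monic_trinomial [Nontrivial R] (hm : 0 < m) : (X ^ (2 * m) + X ^ m + 1 : R[X]).Monic := by
  monicity!
  simp [hm.ne', show ¬2 * m ≤ m by omega, show m ≤ 2 * m by omega]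

theorem natDegree_trinomial [Nontrivial R] (hm : 0 < m) :
    (X ^ (2 * m) + X ^ m + 1 : R[X]).natDegree = 2 * m := by
  compute_degree!
  · simp [hm.ne', show 2 * m ≠ m by omega]
  all_goals omega

theorem modByMonic_trinomial_eq_self [Nontrivial R] (hm : 0 < m) {p : R[X]}
    (hp : p.natDegree < 2 * m) : p %ₘ (X ^ (2 * m) + X ^ m + 1) = p := by
  rw [modByMonic_eq_self_iff (monic_trinomial hm)]
  exact degree_lt_degree (by rwa [natDegree_trinomial hm])

theorem X_pow_modByMonic_trinomial [Nontrivial R] (hm : 0 < m) (h2m : 2 * m ≤ g)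
    (hg : g < 3 * m) :
    (X : R[X]) ^ g %ₘ (X ^ (2 * m) + X ^ m + 1) = -X ^ (g - m) - X ^ (g - 2 * m) := by
  have hdecomp : (X : R[X]) ^ g =
      (X ^ (2 * m) + X ^ m + 1) * X ^ (g - 2 * m) + (-X ^ (g - m) - X ^ (g - 2 * m)) := by
    rw [add_mul, add_mul, one_mul, ← pow_add, ← pow_add, Nat.add_sub_cancel' h2m,
      show m + (g - 2 * m) = g - m by omega]
    ring
  rw [hdecomp, add_modByMonic, self_mul_modByMonic (monic_trinomial hm), zero_add]
  exact modByMonic_trinomial_eq_self hm (by compute_degree; omega)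

theorem lt_natDegree_X_pow_modByMonic_trinomial [Nontrivial R] (hmg : m < g) (hg : g ≠ 2 * m)
    (hg3m : g < 3 * m) :
    m < ((X : R[X]) ^ g %ₘ (X ^ (2 * m) + X ^ m + 1)).natDegree := by
  have hm : 0 < m := by omega
  rcases hg.lt_or_gt with hlt | hgt
  · rwa [modByMonic_trinomial_eq_self hm (by rwa [natDegree_X_pow]), natDegree_X_pow]
  · rw [X_pow_modByMonic_trinomial hm hgt.le hg3m,
      natDegree_sub_eq_left_of_natDegree_lt (by simp; omega), natDegree_neg, natDegree_X_pow]
    omega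

theorem natDegree_y1_modByMonic_trinomial [CharZero R] (hg : 0 < g) (hgm : g < m) :
    ((2 * (X : R[X]) ^ (m + g) + X ^ g - 2 * X ^ m - 1) %ₘ
      (X ^ (2 * m) + X ^ m + 1)).natDegree = m + g := by
  have hdeg : (2 * (X : R[X]) ^ (m + g) + X ^ g - 2 * X ^ m - 1).natDegree = m + g := by
    compute_degree!
    simp [hg.ne', show m ≠ 0 by omega]
  rw [modByMonic_trinomial_eq_self (by omega) (by omega), hdeg]

end Trinomial

theorem deg_y1_three_pow_general (n g : ℕ) (hn : 2 ≤ n) (hg2 : g < 3 ^ n)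
    (hg3 : Nat.gcd g 3 = 1) :
    3 ^ (n - 1) + 1 ≤
      max (((X : ℚ[X]) ^ g %ₘ (X ^ (2 * 3 ^ (n - 1)) + X ^ (3 ^ (n - 1)) + 1)).natDegree)
        (((2 * (X : ℚ[X]) ^ (3 ^ (n - 1) + g) + X ^ g - 2 * X ^ (3 ^ (n - 1)) - 1) %ₘ
            (X ^ (2 * 3 ^ (n - 1)) + X ^ (3 ^ (n - 1)) + 1)).natDegree) := by
  set m := 3 ^ (n - 1)
  have h3m : 3 ∣ m := dvd_pow_self 3 (by omega)
  have hg3m : g < 3 * m := by rwa [← pow_succ', Nat.sub_add_cancel (by omega)]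
  have h3g : ¬3 ∣ g := fun h => by simpa [hg3] using Nat.dvd_gcd h (dvd_refl 3)
  have hg0 : g ≠ 0 := by rintro rfl; exact h3g (dvd_zero 3)
  have hgm : g ≠ m := by rintro rfl; exact h3g h3m
  have hg2m : g ≠ 2 * m := by rintro rfl; exact h3g (h3m.mul_left 2)
  rcases hgm.lt_or_gt with hlt | hgt
  · rw [natDegree_y1_modByMonic_trinomial (by omega) hlt]
    omega
  · exact le_max_of_le_left (lt_natDegree_X_pow_modByMonic_trinomial hgt hg2m hg3m)

theorem deg_y1_three_pow (n g : ℕ) (hn : 2 ≤ n) (hg1 : 1 ≤ g) (hg2 : g < 3 ^ n)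
    (hg3 : Nat.gcd g 3 = 1) :
    3 ^ (n - 1) + 1 ≤
      max (((X : ℚ[X]) ^ g %ₘ (X ^ (2 * 3 ^ (n - 1)) + X ^ (3 ^ (n - 1)) + 1)).natDegree)
        (((2 * (X : ℚ[X]) ^ (3 ^ (n - 1) + g) + X ^ g - 2 * X ^ (3 ^ (n - 1)) - 1) %ₘ
            (X ^ (2 * 3 ^ (n - 1)) + X ^ (3 ^ (n - 1)) + 1)).natDegree) :=
  deg_y1_three_pow_general n g hn hg2 hg3
end
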